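/- arXiv:0812.3642 — 2 statements merged into one kernel-verified Lean document; each statement's English description precedes it below -/
import Mathlib

section
/- For positive integers M₁, M₂, M_r and any r in [0, min(M₁, M₂, M_r)], one has min(d_{M₁,M_r}(r), d_{M_r,M₂}(r)) = d_{min(M₁,M₂), M_r}(r), where d_{M,N} is the piecewise-linear interpolation of (k,(M−k)(N−k)). -/
/-- The optimal point-to-point MIMO DMT curve: the piecewise-linear interpolation of
the points `(k, (M-k)(N-k))`, `k = 0, …, min M N`, written via `k = ⌊r⌋`. -/
noncomputable def dmt (M N : ℕ) (r : ℝ) : ℝ :=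
  ((M : ℝ) - ⌊r⌋) * ((N : ℝ) - ⌊r⌋) - (r - ⌊r⌋) * ((M : ℝ) + (N : ℝ) - 2 * ⌊r⌋ - 1)

/-! The cut-set bound reduces to monotonicity: at fixed `r`, each antenna number enters `dmt`
affinely with slope `N - r` (the floor terms cancel), which is nonnegative for `r ≤ N`. So the
smaller of `M₁, M₂` realises the minimum. -/

theorem dmt_comm (M N : ℕ) (r : ℝ) : dmt M N r = dmt N M r := by
  unfold dmt; ring

theorem dmt_sub_dmt (M M' N : ℕ) (r : ℝ) :
    dmt M' N r - dmt M N r = ((M' : ℝ) - M) * ((N : ℝ) - r) := by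
  unfold dmt; ring

theorem dmt_monotone_left {N : ℕ} {r : ℝ} (hr : r ≤ N) : Monotone fun M => dmt M N r := by
  intro M M' hM
  have hcast : (M : ℝ) ≤ M' := by exact_mod_cast hM
  have hslope : 0 ≤ ((M' : ℝ) - M) * ((N : ℝ) - r) :=
    mul_nonneg (sub_nonneg.mpr hcast) (sub_nonneg.mpr hr)
  linarith [dmt_sub_dmt M M' N r]

theorem min_dmt_left {N : ℕ} {r : ℝ} (hr : r ≤ N) (M M' : ℕ) :
    min (dmt M N r) (dmt M' N r) = dmt (min M M') N r :=
  ((dmt_monotone_left hr).map_min).symm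

theorem stmt11_general (M1 M2 Mr : ℕ) :
    ∀ r ∈ Set.Icc (0 : ℝ) ((min (min M1 M2) Mr : ℕ) : ℝ),
      min (dmt M1 Mr r) (dmt Mr M2 r) = dmt (min M1 M2) Mr r := by
  rintro r ⟨-, hr⟩
  have hrMr : r ≤ Mr := hr.trans (by exact_mod_cast min_le_right (min M1 M2) Mr)
  rw [dmt_comm Mr M2, min_dmt_left hrMr]

/-- The cut-set DMT of the two-hop relay channel:
`min(d_{M₁,M_r}(r), d_{M_r,M₂}(r)) = d_{min(M₁,M₂),M_r}(r)`. -/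
theorem stmt11 (M1 M2 Mr : ℕ) (hM1 : 0 < M1) (hM2 : 0 < M2) (hMr : 0 < Mr) :
    ∀ r ∈ Set.Icc (0 : ℝ) ((min (min M1 M2) Mr : ℕ) : ℝ),
      min (dmt M1 Mr r) (dmt Mr M2 r) = dmt (min M1 M2) Mr r :=
  stmt11_general M1 M2 Mr
end

section
/- Let R = r log₂ SNR and C(SNR) = Σ_{j=1}^{m} log₂(1 + (SNR/M)·SNR^{−α_j}) with fixed α_j ≥ 0 and r ≥ 0. If r < S(α) := Σ_j max(1−α_j,0), then for all sufficiently large SNR, R ≤ C(SNR) − 1; if r > S(α), then for all sufficiently large SNR, R > C(SNR). -/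
/-!
Writing each summand as `log₂(1 + SNR^{1-α_j}/M)`, it lies within a bounded distance
(between `-log₂ M` and `1`) of `max(1-α_j, 0)·log₂ SNR` once `SNR ≥ 1`. Hence `C(SNR)` is
`S(α)·log₂ SNR + O(1)`, and since `log₂ SNR → ∞` any strict gap between `r` and `S(α)`
eventually swallows both the bounded error and the 1-bit penalty.
-/

open Filter Real

lemma div_mul_rpow_neg_eq {x : ℝ} (hx : 0 < x) (M a : ℝ) :
    x / M * x ^ (-a) = x ^ (1 - a) / M := by
  rw [div_mul_eq_mul_div, sub_eq_add_neg, rpow_add hx, rpow_one]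

lemma logb_one_add_rpow_div_le {x M : ℝ} (hx : 1 ≤ x) (hM : 1 ≤ M) (b : ℝ) :
    logb 2 (1 + x ^ b / M) ≤ 1 + max b 0 * logb 2 x := by
  have hx0 : 0 < x := one_pos.trans_le hx
  have hpow : x ^ b / M ≤ x ^ max b 0 :=
    calc x ^ b / M ≤ x ^ b := div_le_self (rpow_nonneg hx0.le b) hM
      _ ≤ x ^ max b 0 := rpow_le_rpow_of_exponent_le hx (le_max_left b 0)
  have hone : 1 ≤ x ^ max b 0 := one_le_rpow hx (le_max_right b 0)
  calc logb 2 (1 + x ^ b / M) ≤ logb 2 (2 * x ^ max b 0) :=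
        logb_le_logb_of_le (by norm_num) (by positivity) (by linarith)
    _ = 1 + max b 0 * logb 2 x := by
        rw [logb_mul (by norm_num) (by positivity), logb_rpow_eq_mul_logb_of_pos hx0,
          logb_self_eq_one (by norm_num)]

lemma le_logb_one_add_rpow_div {x M : ℝ} (hx : 1 ≤ x) (hM : 1 ≤ M) (b : ℝ) :
    max b 0 * logb 2 x - logb 2 M ≤ logb 2 (1 + x ^ b / M) := by
  have hx0 : 0 < x := one_pos.trans_le hx
  have hM0 : 0 < M := one_pos.trans_le hM
  have hpos : 0 < x ^ b / M := by positivity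
  rcases le_total b 0 with hb | hb
  · have hlogM : 0 ≤ logb 2 M := logb_nonneg (by norm_num) hM
    have hlog : 0 ≤ logb 2 (1 + x ^ b / M) := logb_nonneg (by norm_num) (by linarith)
    rw [max_eq_right hb]
    linarith
  · calc max b 0 * logb 2 x - logb 2 M = logb 2 (x ^ b / M) := by
          rw [max_eq_left hb, logb_div (by positivity) hM0.ne',
            logb_rpow_eq_mul_logb_of_pos hx0]
      _ ≤ logb 2 (1 + x ^ b / M) := logb_le_logb_of_le (by norm_num) hpos (by linarith)

section Asymptotics

variable {ι : Type*} {l : Filter ι} {L f : ι → ℝ} {r S c : ℝ}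

lemma eventually_mul_le_sub_one_of_lt (hL : Tendsto L l atTop) (hrS : r < S)
    (hf : ∀ᶠ x in l, S * L x - c ≤ f x) : ∀ᶠ x in l, r * L x ≤ f x - 1 := by
  have hgap : Tendsto (fun x => (S - r) * L x) l atTop :=
    hL.const_mul_atTop (sub_pos.2 hrS)
  filter_upwards [hgap.eventually_ge_atTop (c + 1), hf] with x hx hfx
  linarith

lemma eventually_lt_mul_of_lt (hL : Tendsto L l atTop) (hSr : S < r)
    (hf : ∀ᶠ x in l, f x ≤ c + S * L x) : ∀ᶠ x in l, f x < r * L x := by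
  have hgap : Tendsto (fun x => (r - S) * L x) l atTop :=
    hL.const_mul_atTop (sub_pos.2 hSr)
  filter_upwards [hgap.eventually_gt_atTop c, hf] with x hx hfx
  linarith

end Asymptotics

section Capacity

variable {m : ℕ} {M : ℝ} (α : Fin m → ℝ)

lemma sum_logb_capacity_le {x : ℝ} (hx : 1 ≤ x) (hM : 1 ≤ M) :
    ∑ j, logb 2 (1 + x / M * x ^ (-α j)) ≤ m + (∑ j, max (1 - α j) 0) * logb 2 x := by
  calc ∑ j, logb 2 (1 + x / M * x ^ (-α j))
      ≤ ∑ j, (1 + max (1 - α j) 0 * logb 2 x) := by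
        gcongr with j
        rw [div_mul_rpow_neg_eq (one_pos.trans_le hx)]
        exact logb_one_add_rpow_div_le hx hM _
    _ = m + (∑ j, max (1 - α j) 0) * logb 2 x := by
        simp [Finset.sum_add_distrib, Finset.sum_mul]

lemma le_sum_logb_capacity {x : ℝ} (hx : 1 ≤ x) (hM : 1 ≤ M) :
    (∑ j, max (1 - α j) 0) * logb 2 x - m * logb 2 M ≤
      ∑ j, logb 2 (1 + x / M * x ^ (-α j)) := by
  calc (∑ j, max (1 - α j) 0) * logb 2 x - m * logb 2 M
      = ∑ j, (max (1 - α j) 0 * logb 2 x - logb 2 M) := by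
        simp [Finset.sum_sub_distrib, Finset.sum_mul]
    _ ≤ ∑ j, logb 2 (1 + x / M * x ^ (-α j)) := by
        gcongr with j
        rw [div_mul_rpow_neg_eq (one_pos.trans_le hx)]
        exact le_logb_one_add_rpow_div hx hM _

end Capacity

theorem stmt19_general (M m : ℕ) (hM : 0 < M) (α : Fin m → ℝ) (r : ℝ) :
    ((r < ∑ j, max (1 - α j) 0) → ∀ᶠ SNR : ℝ in atTop,
      r * Real.logb 2 SNR ≤
        (∑ j, Real.logb 2 (1 + (SNR / (M : ℝ)) * SNR ^ (-(α j)))) - 1) ∧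
    ((r > ∑ j, max (1 - α j) 0) → ∀ᶠ SNR : ℝ in atTop,
      r * Real.logb 2 SNR >
        ∑ j, Real.logb 2 (1 + (SNR / (M : ℝ)) * SNR ^ (-(α j)))) := by
  have hM1 : (1 : ℝ) ≤ M := Nat.one_le_cast.2 hM
  have hlog : Tendsto (logb 2) atTop atTop := tendsto_logb_atTop (by norm_num)
  refine ⟨fun hrS => ?_, fun hSr => ?_⟩
  · refine eventually_mul_le_sub_one_of_lt (c := m * logb 2 M) hlog hrS ?_
    filter_upwards [eventually_ge_atTop 1] with x hx
    exact le_sum_logb_capacity α hx hM1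
  · refine eventually_lt_mul_of_lt (c := m) hlog hSr ?_
    filter_upwards [eventually_ge_atTop 1] with x hx
    exact sum_logb_capacity_le α hx hM1

/-- Asymptotic outage threshold: with `R = r log₂ SNR` and
`C(SNR) = Σ_j log₂(1 + (SNR/M) SNR^{-α_j})`, if `r < S(α)` then eventually
`R ≤ C(SNR) - 1`, and if `r > S(α)` then eventually `R > C(SNR)`. -/
theorem stmt19 (M m : ℕ) (hM : 0 < M) (hm : 0 < m) (α : Fin m → ℝ)
    (hα : ∀ j, 0 ≤ α j) (r : ℝ) (hr : 0 ≤ r) :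
    ((r < ∑ j, max (1 - α j) 0) → ∀ᶠ SNR : ℝ in atTop,
      r * Real.logb 2 SNR ≤
        (∑ j, Real.logb 2 (1 + (SNR / (M : ℝ)) * SNR ^ (-(α j)))) - 1) ∧
    ((r > ∑ j, max (1 - α j) 0) → ∀ᶠ SNR : ℝ in atTop,
      r * Real.logb 2 SNR >
        ∑ j, Real.logb 2 (1 + (SNR / (M : ℝ)) * SNR ^ (-(α j)))) :=
  stmt19_general M m hM α r
end
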